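/- arXiv:1008.0595 — 2 statements merged into one kernel-verified Lean document; each statement's English description precedes it below -/
import Mathlib

section
/- If G and G' are finite JIS graphs, then their Cartesian (box) product G □ G' is JIS. -/
/-!
Represent `G` by `n`-sets `S x` and `G'` by `m`-sets `T y`, and give `(x, y)` the disjoint union
of `S x` and `T y`, an `(n + m)`-set. Its intersection with the set of `(x', y')` has
`|S x ∩ S x'| + |T y ∩ T y'|` elements; each summand is maximal exactly when the coordinates
agree, and one less when they are adjacent, so the total is `n + m - 1` exactly when one
coordinate agrees and the other is adjacent, that is, in the box product.
-/

/-- A finite simple graph `G` is JIS (isomorphic to an induced subgraph of a Johnson graph)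
if for some positive integer `n` there is an injective assignment `v ↦ S v` of `n`-element
finite subsets of `ℕ` to the vertices of `G` such that two distinct vertices `v` and `w`
are adjacent if and only if `|S v ∩ S w| = n - 1`. -/
def IsJIS {V : Type*} [Fintype V] (G : SimpleGraph V) : Prop :=
  ∃ n : ℕ, 0 < n ∧ ∃ S : V → Finset ℕ, Function.Injective S ∧
    (∀ v, (S v).card = n) ∧
    ∀ v w : V, v ≠ w → (G.Adj v w ↔ (S v ∩ S w).card = n - 1)

open Finset Function

lemma Finset.card_inter_lt_of_card_eq {ι : Type*} [DecidableEq ι] {s t : Finset ι} {n : ℕ}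
    (hs : #s = n) (ht : #t = n) (hst : s ≠ t) : #(s ∩ t) < n := by
  have hsub : ¬s ⊆ t := fun h ↦ hst (eq_of_subset_of_card_le h (by omega))
  exact hs ▸ card_lt_card (inf_lt_left.2 hsub)

lemma Finset.disjSum_inter_disjSum {ι κ : Type*} [DecidableEq ι] [DecidableEq κ]
    (s s' : Finset ι) (t t' : Finset κ) :
    s.disjSum t ∩ s'.disjSum t' = (s ∩ s').disjSum (t ∩ t') := by
  ext (x | x) <;> simp

/-- The disjoint union of `s` and `t`, placed on the even and the odd numbers respectively. -/
def natDisjSum (s t : Finset ℕ) : Finset ℕ :=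
  (s.disjSum t).map Equiv.natSumNatEquivNat.toEmbedding

lemma card_natDisjSum (s t : Finset ℕ) : #(natDisjSum s t) = #s + #t := by
  rw [natDisjSum, card_map, card_disjSum]

lemma natDisjSum_inter_natDisjSum (s s' t t' : Finset ℕ) :
    natDisjSum s t ∩ natDisjSum s' t' = natDisjSum (s ∩ s') (t ∩ t') := by
  rw [natDisjSum, natDisjSum, ← map_inter, disjSum_inter_disjSum, natDisjSum]

lemma natDisjSum_injective2 : Injective2 natDisjSum := fun _ _ _ _ h ↦
  Injective2_disjSum (map_injective _ h)

structure IsJISRep {V : Type*} (G : SimpleGraph V) (n : ℕ) (S : V → Finset ℕ) : Prop where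
  injective : Injective S
  card_eq : ∀ v, #(S v) = n
  adj_iff : ∀ v w, v ≠ w → (G.Adj v w ↔ #(S v ∩ S w) = n - 1)

theorem isJIS_iff_exists_isJISRep {V : Type*} [Fintype V] {G : SimpleGraph V} :
    IsJIS G ↔ ∃ n, 0 < n ∧ ∃ S, IsJISRep G n S :=
  ⟨fun ⟨n, hn, S, h₁, h₂, h₃⟩ ↦ ⟨n, hn, S, ⟨h₁, h₂, h₃⟩⟩,
    fun ⟨n, hn, S, ⟨h₁, h₂, h₃⟩⟩ ↦ ⟨n, hn, S, h₁, h₂, h₃⟩⟩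

namespace IsJISRep

variable {α β : Type*} {G : SimpleGraph α} {G' : SimpleGraph β} {n m : ℕ}
  {S : α → Finset ℕ} {T : β → Finset ℕ}

lemma card_inter_lt (hS : IsJISRep G n S) {x x' : α} (hx : x ≠ x') : #(S x ∩ S x') < n :=
  card_inter_lt_of_card_eq (hS.card_eq x) (hS.card_eq x') (hS.injective.ne hx)

lemma boxProd_adj_iff (hn : 0 < n) (hm : 0 < m) (hS : IsJISRep G n S) (hT : IsJISRep G' m T)
    {p q : α × β} (hpq : p ≠ q) :
    (G □ G').Adj p q ↔ #(S p.1 ∩ S q.1) + #(T p.2 ∩ T q.2) = n + m - 1 := by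
  obtain ⟨x, y⟩ := p
  obtain ⟨x', y'⟩ := q
  rw [SimpleGraph.boxProd_adj]
  rcases eq_or_ne x x' with rfl | hx
  · have hy : y ≠ y' := fun h ↦ hpq (by rw [h])
    simp only [inter_self, hS.card_eq, hT.adj_iff y y' hy, G.irrefl, and_true, false_and,
      false_or]
    omega
  have hSlt := hS.card_inter_lt hx
  rcases eq_or_ne y y' with rfl | hy
  · simp only [inter_self, hT.card_eq, hS.adj_iff x x' hx, G'.irrefl, and_true, false_and,
      or_false]
    omega
  have hTlt := hT.card_inter_lt hy
  simp only [hx, hy, and_false, or_self, false_iff]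
  omega

theorem boxProd (hn : 0 < n) (hm : 0 < m) (hS : IsJISRep G n S) (hT : IsJISRep G' m T) :
    IsJISRep (G □ G') (n + m) fun p ↦ natDisjSum (S p.1) (T p.2) where
  injective _ _ h := by
    obtain ⟨h₁, h₂⟩ := natDisjSum_injective2 h
    exact Prod.ext (hS.injective h₁) (hT.injective h₂)
  card_eq p := by rw [card_natDisjSum, hS.card_eq, hT.card_eq]
  adj_iff p q hpq := by
    rw [natDisjSum_inter_natDisjSum, card_natDisjSum]
    exact boxProd_adj_iff hn hm hS hT hpq

end IsJISRep

/-- the Cartesian (box) product of two finite JIS graphs is JIS. -/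
theorem boxProd_isJIS {α β : Type*} [Fintype α] [Fintype β]
    (G : SimpleGraph α) (G' : SimpleGraph β) (hG : IsJIS G) (hG' : IsJIS G') :
    IsJIS (G □ G') := by
  rw [isJIS_iff_exists_isJISRep] at *
  obtain ⟨n, hn, S, hS⟩ := hG
  obtain ⟨m, hm, T, hT⟩ := hG'
  exact ⟨n + m, by omega, _, hS.boxProd hn hm hT⟩
end

section
/- The graph Δ_3 is JIS. -/
/-- The graph `Δ i` (`i ≥ 2`): vertices `0, …, i+1` represent `v 1, …, v (i+2)`, and the
last vertex `i+2` represents `w`.  Edges: `v j — v (j+1)` for `1 ≤ j ≤ i+1`,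
`v j — v (j+2)` for `1 ≤ j ≤ i` (a chain of `i` consecutively adjacent triangles),
together with `w — v 1` and `w — v (i+2)`. -/
def DeltaGraph (i : ℕ) : SimpleGraph (Fin (i + 3)) :=
  SimpleGraph.fromRel (fun a b =>
    (b.val = a.val + 1 ∧ b.val ≤ i + 1) ∨
    (b.val = a.val + 2 ∧ b.val ≤ i + 1) ∨
    (a.val = i + 2 ∧ (b.val = 0 ∨ b.val = i + 1)))

/-! With `n = 2` the labels are edges of a complete graph on `ℕ`, and two distinct labels meet in
one element exactly when the edges share an endpoint. So a graph is JIS as soon as it is the line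
graph of a graph on `ℕ`, and `Δ 3` is the line graph of the graph with edges
`01, 02, 03, 23, 34, 14`: the triangles of `Δ 3` are the star at `0`, the triangle `023` and the
star at `3`, and `w = 14` touches the first edge `01` and the last edge `34`. -/

theorem card_inter_eq_one_iff_not_disjoint {α : Type*} [DecidableEq α] {s t : Finset α}
    (hs : s.card = 2) (ht : t.card = 2) (hst : s ≠ t) : (s ∩ t).card = 1 ↔ ¬Disjoint s t := by
  have hlt : (s ∩ t).card < 2 := by
    by_contra! hle
    exact hst <| (Finset.eq_of_subset_of_card_le Finset.inter_subset_left (by omega)).symm.trans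
      (Finset.eq_of_subset_of_card_le Finset.inter_subset_right (by omega))
  rw [Finset.not_disjoint_iff_nonempty_inter, ← Finset.card_pos]
  omega

theorem isJIS_of_line_graph {V : Type*} [Fintype V] (G : SimpleGraph V) (S : V → Finset ℕ)
    (hS : Function.Injective S) (hcard : ∀ v, (S v).card = 2)
    (hadj : ∀ v w, v ≠ w → (G.Adj v w ↔ ¬Disjoint (S v) (S w))) : IsJIS G :=
  ⟨2, two_pos, S, hS, hcard, fun v w hvw => (hadj v w hvw).trans
    (card_inter_eq_one_iff_not_disjoint (hcard v) (hcard w) (hS.ne hvw)).symm⟩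

def deltaThreeLabel : Fin 6 → Finset ℕ := ![{0, 1}, {0, 2}, {0, 3}, {2, 3}, {3, 4}, {1, 4}]

theorem deltaThreeLabel_injective : Function.Injective deltaThreeLabel := by decide

theorem card_deltaThreeLabel (v : Fin 6) : (deltaThreeLabel v).card = 2 := by
  revert v; decide

theorem deltaGraph_three_adj_iff (v w : Fin 6) :
    (DeltaGraph 3).Adj v w ↔ v ≠ w ∧ ¬Disjoint (deltaThreeLabel v) (deltaThreeLabel w) := by
  rw [DeltaGraph, SimpleGraph.fromRel_adj]
  revert v w; decide

/-- the graph `Δ 3` is JIS. -/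
theorem delta_three_isJIS : IsJIS (DeltaGraph 3) :=
  isJIS_of_line_graph _ deltaThreeLabel deltaThreeLabel_injective card_deltaThreeLabel
    fun v w hvw => (deltaGraph_three_adj_iff v w).trans (and_iff_right hvw)
end
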